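/- For the Laplace distribution with location 0 and scale α > 0, the integral J = ∫∫∫_{y < x < z} (x−y)(z−x) f(z) f(y) f(x) dz dy dx, where f(x) = (1/(2α))·exp(−|x|/α), equals 5α²/24. -/

import Mathlib

/-!
Write `f` for the density and `B x = ∫_{z > x} (z - x) f z`. The inner double integral factors as
`f x * A x * B x` with `A x = ∫_{y < x} (x - y) f y`, and `A x = B (-x)` because `f` is even.
For `x ≥ 0`, `B x = α/2 · e^{-x/α}` by direct integration; for `x < 0` the relation
`B x - A x = ∫ (z - x) f z = -x` (`f` has mass 1 and mean 0) reduces to that case, so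
`B x = max (-x) 0 + α/2 · e^{-|x|/α}`.
Hence the inner integral is `|x|/4 · e^{-2|x|/α} + α/8 · e^{-3|x|/α}`, an even function whose
integral is `2 (α²/16 + α²/24) = 5α²/24`.
-/

open MeasureTheory

/-- Density of the Laplace distribution with location `0` and scale `α`. -/
noncomputable def laplaceDensity (α x : ℝ) : ℝ :=
  (1 / (2 * α)) * Real.exp (-|x| / α)

open Set Real

section ExpMoments

variable {r : ℝ}

lemma integral_exp_neg_mul_Ioi_zero (hr : 0 < r) : ∫ t in Ioi (0 : ℝ), exp (-r * t) = 1 / r := by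
  rw [integral_exp_mul_Ioi (neg_neg_of_pos hr), mul_zero, exp_zero]
  field_simp

lemma integral_mul_exp_neg_mul_Ioi_zero (hr : 0 < r) :
    ∫ t in Ioi (0 : ℝ), t * exp (-r * t) = 1 / r ^ 2 := by
  have h := integral_rpow_mul_exp_neg_mul_Ioi two_pos hr
  norm_num [Gamma_two] at h
  simpa [neg_mul] using h

lemma integrableOn_mul_exp_neg_mul_Ioi_zero (hr : 0 < r) :
    IntegrableOn (fun t => t * exp (-r * t)) (Ioi 0) := by
  simpa using integrableOn_rpow_mul_exp_neg_mul_rpow (s := 1) (p := 1) (by norm_num) one_pos hr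

end ExpMoments

lemma integral_Ioi_comp_add_right (g : ℝ → ℝ) (c : ℝ) :
    ∫ t in Ioi 0, g (t + c) = ∫ z in Ioi c, g z := by
  have h := (measurePreserving_add_right volume c).setIntegral_preimage_emb
    (measurableEmbedding_addRight c) g (Ioi c)
  simpa using h

lemma integrable_of_integrableOn_Ioi_of_comp_neg {h : ℝ → ℝ} (hpos : IntegrableOn h (Ioi 0))
    (hneg : IntegrableOn (fun z => h (-z)) (Ioi 0)) : Integrable h := by
  have hIic : IntegrableOn h (Iic 0) := by
    rw [← Measure.map_neg_eq_self (volume : Measure ℝ), measurableEmbedding_neg.integrableOn_map_iff]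
    simpa [Function.comp_def, integrableOn_Ici_iff_integrableOn_Ioi] using hneg
  rw [← integrableOn_univ, ← Iic_union_Ioi (a := (0 : ℝ))]
  exact hIic.union hpos

section PartialMoments

variable {g : ℝ → ℝ}

lemma integral_Iio_sub_mul_eq_of_even (hg : ∀ z, g (-z) = g z) (x : ℝ) :
    ∫ y in Iio x, (x - y) * g y = ∫ z in Ioi (-x), (z - -x) * g z := by
  have h := integral_comp_neg_Ioi (-x) fun y => (x - y) * g y
  rw [neg_neg] at h
  rw [← integral_Iic_eq_integral_Iio, ← h]
  refine setIntegral_congr_fun measurableSet_Ioi fun z _ => ?_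
  rw [hg]
  ring

lemma integral_mul_eq_zero_of_even (hg : ∀ z, g (-z) = g z) : ∫ z, z * g z = 0 := by
  have h := integral_neg_eq_self (fun z => z * g z) volume
  simp only [hg, neg_mul, integral_neg] at h
  linarith

lemma integral_Ioi_sub_mul_sub_integral_Iio_sub_mul (hg : Integrable g)
    (hzg : Integrable fun z => z * g z) (x : ℝ) :
    (∫ z in Ioi x, (z - x) * g z) - ∫ z in Iio x, (x - z) * g z
      = (∫ z, z * g z) - x * ∫ z, g z := by
  have hint : Integrable fun z => (z - x) * g z :=
    (hzg.sub (hg.const_mul x)).congr (.of_forall fun z => by simp only [Pi.sub_apply]; ring)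
  have hsplit : (∫ z in Iio x, (z - x) * g z) + ∫ z in Ioi x, (z - x) * g z
      = ∫ z, (z - x) * g z := by
    rw [← integral_Iic_eq_integral_Iio]
    exact intervalIntegral.integral_Iic_add_Ioi hint.integrableOn hint.integrableOn
  have hflip : ∫ z in Iio x, (x - z) * g z = -∫ z in Iio x, (z - x) * g z := by
    rw [← integral_neg]
    refine setIntegral_congr_fun measurableSet_Iio fun z _ => by ring
  have htotal : ∫ z, (z - x) * g z = (∫ z, z * g z) - x * ∫ z, g z := by
    simp only [sub_mul]
    rw [integral_sub hzg (hg.const_mul x), integral_const_mul]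
  linarith

end PartialMoments

section Laplace

variable {α : ℝ}

@[simp]
lemma laplaceDensity_neg (α x : ℝ) : laplaceDensity α (-x) = laplaceDensity α x := by
  simp [laplaceDensity]

lemma laplaceDensity_eq (α x : ℝ) : laplaceDensity α x = 1 / (2 * α) * exp (-α⁻¹ * |x|) := by
  rw [laplaceDensity, neg_div, neg_mul, div_eq_inv_mul |x|]

lemma laplaceDensity_of_nonneg {x : ℝ} (hx : 0 ≤ x) :
    laplaceDensity α x = 1 / (2 * α) * exp (-α⁻¹ * x) := by
  rw [laplaceDensity_eq, abs_of_nonneg hx]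

lemma integrable_laplaceDensity (hα : 0 < α) : Integrable (laplaceDensity α) := by
  have hexp : IntegrableOn (fun z => 1 / (2 * α) * exp (-α⁻¹ * z)) (Ioi 0) :=
    (exp_neg_integrableOn_Ioi 0 (inv_pos.2 hα)).const_mul _
  have hpos : IntegrableOn (laplaceDensity α) (Ioi 0) :=
    hexp.congr_fun (fun z hz => (laplaceDensity_of_nonneg (le_of_lt hz)).symm) measurableSet_Ioi
  exact integrable_of_integrableOn_Ioi_of_comp_neg hpos (by simpa using hpos)

lemma integrable_mul_laplaceDensity (hα : 0 < α) : Integrable fun z => z * laplaceDensity α z := by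
  have hexp : IntegrableOn (fun z => 1 / (2 * α) * (z * exp (-α⁻¹ * z))) (Ioi 0) :=
    (integrableOn_mul_exp_neg_mul_Ioi_zero (inv_pos.2 hα)).const_mul _
  have hpos : IntegrableOn (fun z => z * laplaceDensity α z) (Ioi 0) :=
    hexp.congr_fun
      (fun z hz => by rw [laplaceDensity_of_nonneg (le_of_lt hz)]; ring) measurableSet_Ioi
  exact integrable_of_integrableOn_Ioi_of_comp_neg hpos (by simpa using hpos.neg)

lemma integral_laplaceDensity (hα : 0 < α) : ∫ z, laplaceDensity α z = 1 := by
  simp_rw [laplaceDensity_eq, integral_const_mul]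
  rw [integral_comp_abs (f := fun t => exp (-α⁻¹ * t)),
    integral_exp_neg_mul_Ioi_zero (inv_pos.2 hα)]
  field_simp

lemma integral_Ioi_sub_mul_laplaceDensity_of_nonneg (hα : 0 < α) {x : ℝ} (hx : 0 ≤ x) :
    ∫ z in Ioi x, (z - x) * laplaceDensity α z = α / 2 * exp (-x / α) := by
  rw [← integral_Ioi_comp_add_right]
  have h : ∀ t ∈ Ioi (0 : ℝ), (t + x - x) * laplaceDensity α (t + x)
      = exp (-α⁻¹ * x) / (2 * α) * (t * exp (-α⁻¹ * t)) := fun t ht => by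
    rw [laplaceDensity_of_nonneg (by linarith [mem_Ioi.1 ht]), mul_add, exp_add]
    ring
  rw [setIntegral_congr_fun measurableSet_Ioi h, integral_const_mul,
    integral_mul_exp_neg_mul_Ioi_zero (inv_pos.2 hα), neg_div, div_eq_inv_mul, neg_mul]
  field_simp

lemma integral_Ioi_sub_mul_laplaceDensity (hα : 0 < α) (x : ℝ) :
    ∫ z in Ioi x, (z - x) * laplaceDensity α z = max (-x) 0 + α / 2 * exp (-|x| / α) := by
  rcases le_total 0 x with hx | hx
  · rw [integral_Ioi_sub_mul_laplaceDensity_of_nonneg hα hx, abs_of_nonneg hx,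
      max_eq_right (neg_nonpos.2 hx), zero_add]
  · have hparity := integral_Ioi_sub_mul_sub_integral_Iio_sub_mul (integrable_laplaceDensity hα)
      (integrable_mul_laplaceDensity hα) x
    rw [integral_mul_eq_zero_of_even (laplaceDensity_neg α), integral_laplaceDensity hα,
      integral_Iio_sub_mul_eq_of_even (laplaceDensity_neg α),
      integral_Ioi_sub_mul_laplaceDensity_of_nonneg hα (neg_nonneg.2 hx)] at hparity
    rw [abs_of_nonpos hx, max_eq_left (neg_nonneg.2 hx)]
    linarith

lemma integral_Iio_integral_Ioi_laplaceDensity (hα : 0 < α) (x : ℝ) :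
    ∫ y in Iio x, ∫ z in Ioi x,
        (x - y) * (z - x) * laplaceDensity α z * laplaceDensity α y * laplaceDensity α x
      = 1 / 4 * (|x| * exp (-(2 / α) * |x|)) + α / 8 * exp (-(3 / α) * |x|) := by
  have hfactor : ∀ y z, (x - y) * (z - x) * laplaceDensity α z * laplaceDensity α y *
      laplaceDensity α x = (x - y) * laplaceDensity α y * laplaceDensity α x *
      ((z - x) * laplaceDensity α z) := fun y z => by ring
  simp_rw [hfactor, integral_const_mul, integral_mul_const]
  rw [integral_Iio_sub_mul_eq_of_even (laplaceDensity_neg α), integral_Ioi_sub_mul_laplaceDensity hα,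
    integral_Ioi_sub_mul_laplaceDensity hα, laplaceDensity, neg_neg, abs_neg]
  have he2 : exp (-(2 / α) * |x|) = exp (-|x| / α) ^ 2 := by
    rw [← exp_nat_mul]; ring_nf
  have he3 : exp (-(3 / α) * |x|) = exp (-|x| / α) ^ 3 := by
    rw [← exp_nat_mul]; ring_nf
  rw [he2, he3]
  rcases le_total 0 x with hx | hx
  · rw [abs_of_nonneg hx, max_eq_left hx, max_eq_right (neg_nonpos.2 hx)]
    field_simp
    ring
  · rw [abs_of_nonpos hx, max_eq_right hx, max_eq_left (neg_nonneg.2 hx)]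
    field_simp
    ring

end Laplace

theorem stmt12 (α : ℝ) (hα : 0 < α) :
    (∫ x : ℝ, ∫ y in Set.Iio x, ∫ z in Set.Ioi x,
        (x - y) * (z - x) * laplaceDensity α z * laplaceDensity α y * laplaceDensity α x) =
      5 * α ^ 2 / 24 := by
  have h2 : 0 < 2 / α := by positivity
  have h3 : 0 < 3 / α := by positivity
  simp_rw [integral_Iio_integral_Ioi_laplaceDensity hα]
  rw [integral_comp_abs
      (f := fun t => 1 / 4 * (t * exp (-(2 / α) * t)) + α / 8 * exp (-(3 / α) * t)),
    integral_add ((integrableOn_mul_exp_neg_mul_Ioi_zero h2).const_mul _)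
      ((exp_neg_integrableOn_Ioi 0 h3).const_mul _),
    integral_const_mul, integral_const_mul, integral_mul_exp_neg_mul_Ioi_zero h2,
    integral_exp_neg_mul_Ioi_zero h3]
  field_simp
  ring
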